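/- Quasi-cycles preserve the Gibbs state but violate detailed balance: let β > 0, n ≥ 3, and E : Fin n → ℝ with maximum energy E_max and Gibbs distribution τ. Define the quasi-cycle matrix Q by Q_{i+1,i} = exp(−β(E_max − E_i)), Q_{i,i} = 1 − exp(−β(E_max − E_i)) (indices mod n), and all other entries 0. Then Q is a stochastic matrix with Qτ = τ, and Q does not satisfy detailed balance: there exist i, j with Q_{ji}·exp(−β E_i) ≠ Q_{ij}·exp(−β E_j). -/

import Mathlib

open Finset

/-- A (column-)stochastic matrix: nonnegative entries, each column sums to 1.
It acts on probability vectors by `(Q.mulVec p) j = ∑ i, Q j i * p i`. -/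
def IsStochastic {ι : Type*} [Fintype ι] (Q : Matrix ι ι ℝ) : Prop :=
  (∀ i j, 0 ≤ Q i j) ∧ ∀ j, ∑ i, Q i j = 1

/-- The partition function `Z = ∑ i, exp (-β E i)`. -/
noncomputable def partZ {ι : Type*} [Fintype ι] (β : ℝ) (E : ι → ℝ) : ℝ :=
  ∑ i, Real.exp (-(β * E i))

/-- The Gibbs distribution `τ i = exp (-β E i) / Z`. -/
noncomputable def gibbs {ι : Type*} [Fintype ι] (β : ℝ) (E : ι → ℝ) : ι → ℝ :=
  fun i => Real.exp (-(β * E i)) / partZ β E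

/-- The maximum energy `E_max = sup (range E)`. -/
noncomputable def Emax {n : ℕ} (E : Fin n → ℝ) : ℝ := sSup (Set.range E)

/-- The quasi-cycle matrix: `Q (i+1) i = exp (-β (E_max - E i))`,
`Q i i = 1 - exp (-β (E_max - E i))` (indices mod `n`), all other entries `0`. -/
noncomputable def quasiCycle {n : ℕ} [NeZero n] (β : ℝ) (E : Fin n → ℝ) :
    Matrix (Fin n) (Fin n) ℝ :=
  fun j i =>
    if j = i + 1 then Real.exp (-(β * (Emax E - E i)))
    else if j = i then 1 - Real.exp (-(β * (Emax E - E i)))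
    else 0

/-! Around the cycle `0 → 1 → ⋯ → n-1 → 0` the probability flux into state `j` is
`w (j-1) p (j-1)` and the flux out of it is `w j p j`, so `p` is stationary as soon as the flux
`w i p i` is the same along every edge. For the quasi-cycle, `w i τ i = exp (-β E_max) / Z` for all `i`.
Detailed balance fails because the cycle has no reverse edges: for `n ≥ 3`, `Q 0 1 = 0 < Q 1 0`. -/

theorem Fin.add_one_ne_self {n : ℕ} [NeZero n] (hn : 2 ≤ n) (i : Fin n) : i + 1 ≠ i :=
  add_ne_left.mpr fun h => by rw [Fin.one_eq_zero_iff] at h; omega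

theorem le_Emax {n : ℕ} (E : Fin n → ℝ) (i : Fin n) : E i ≤ Emax E :=
  le_ciSup (Finite.bddAbove_range E) i

def cycleMatrix {R : Type*} [Ring R] {n : ℕ} [NeZero n] (w : Fin n → R) :
    Matrix (Fin n) (Fin n) R :=
  fun j i => if j = i + 1 then w i else if j = i then 1 - w i else 0

section cycleMatrix

variable {R : Type*} [Ring R] {n : ℕ} [NeZero n] (w : Fin n → R)

theorem cycleMatrix_apply_add_one (i : Fin n) : cycleMatrix w (i + 1) i = w i :=
  if_pos rfl

theorem cycleMatrix_apply_self (hn : 2 ≤ n) (i : Fin n) : cycleMatrix w i i = 1 - w i :=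
  (if_neg (Fin.add_one_ne_self hn i).symm).trans (if_pos rfl)

theorem cycleMatrix_apply_of_ne {i j : Fin n} (h₁ : j ≠ i + 1) (h₂ : j ≠ i) :
    cycleMatrix w j i = 0 :=
  (if_neg h₁).trans (if_neg h₂)

theorem sum_cycleMatrix_apply (hn : 2 ≤ n) (i : Fin n) : ∑ j, cycleMatrix w j i = 1 := by
  rw [Fintype.sum_eq_add (i + 1) i (Fin.add_one_ne_self hn i)
      fun j hj => cycleMatrix_apply_of_ne w hj.1 hj.2,
    cycleMatrix_apply_add_one, cycleMatrix_apply_self w hn, add_sub_cancel]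

theorem cycleMatrix_mulVec_apply (hn : 2 ≤ n) (p : Fin n → R) (j : Fin n) :
    (cycleMatrix w).mulVec p j = w (j - 1) * p (j - 1) + (1 - w j) * p j := by
  have hpred : j - 1 ≠ j := fun h => Fin.add_one_ne_self hn (j - 1) (by rw [sub_add_cancel, h])
  have hrest : ∀ i, i ≠ j - 1 ∧ i ≠ j → cycleMatrix w j i * p i = 0 := by
    rintro i ⟨hi₁, hi₂⟩
    rw [cycleMatrix_apply_of_ne w (fun h => hi₁ (by rw [h, add_sub_cancel_right])) (Ne.symm hi₂),
      zero_mul]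
  have hprev : cycleMatrix w j (j - 1) = w (j - 1) := by
    simpa only [sub_add_cancel] using cycleMatrix_apply_add_one w (j - 1)
  rw [Matrix.mulVec, dotProduct, Fintype.sum_eq_add (j - 1) j hpred hrest, hprev,
    cycleMatrix_apply_self w hn]

theorem cycleMatrix_mulVec_eq_self (hn : 2 ≤ n) {p : Fin n → R} {c : R}
    (hflux : ∀ i, w i * p i = c) : (cycleMatrix w).mulVec p = p := by
  funext j
  rw [cycleMatrix_mulVec_apply w hn, sub_mul, one_mul, hflux, hflux]
  abel

theorem cycleMatrix_one_zero_ne_zero_one (hn : 3 ≤ n) (p : Fin n → R) (h : w 0 * p 0 ≠ 0) :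
    cycleMatrix w 1 0 * p 0 ≠ cycleMatrix w 0 1 * p 1 := by
  have h₁ : (0 : Fin n) ≠ 1 + 1 := by
    intro heq
    have := congrArg Fin.val heq
    simp [Fin.val_add, Nat.mod_eq_of_lt (show 1 < n by omega),
      Nat.mod_eq_of_lt (show 2 < n by omega)] at this
  have h₂ : (0 : Fin n) ≠ 1 := fun h => by rw [eq_comm, Fin.one_eq_zero_iff] at h; omega
  rwa [cycleMatrix_apply_of_ne w h₁ h₂, zero_mul, ← zero_add (1 : Fin n),
    cycleMatrix_apply_add_one]

end cycleMatrix

theorem isStochastic_cycleMatrix {n : ℕ} [NeZero n] (hn : 2 ≤ n) {w : Fin n → ℝ}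
    (hw₀ : ∀ i, 0 ≤ w i) (hw₁ : ∀ i, w i ≤ 1) : IsStochastic (cycleMatrix w) := by
  refine ⟨fun j i => ?_, sum_cycleMatrix_apply w hn⟩
  unfold cycleMatrix
  split_ifs
  exacts [hw₀ i, sub_nonneg.mpr (hw₁ i), le_rfl]

theorem quasiCycle_eq_cycleMatrix {n : ℕ} [NeZero n] (β : ℝ) (E : Fin n → ℝ) :
    quasiCycle β E = cycleMatrix fun i => Real.exp (-(β * (Emax E - E i))) :=
  rfl

/-- For `n ≥ 3`, the quasi-cycle is a stochastic matrix preserving the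
Gibbs state, yet it violates detailed balance. -/
theorem quasiCycle_gibbs_preserving_not_detailed_balance {n : ℕ} [NeZero n]
    (hn : 3 ≤ n) (β : ℝ) (hβ : 0 < β) (E : Fin n → ℝ) :
    IsStochastic (quasiCycle β E) ∧
    (quasiCycle β E).mulVec (gibbs β E) = gibbs β E ∧
    ∃ i j : Fin n, quasiCycle β E j i * Real.exp (-(β * E i)) ≠
      quasiCycle β E i j * Real.exp (-(β * E j)) := by
  have hn₂ : 2 ≤ n := by omega
  have hrate_le_one (i : Fin n) : Real.exp (-(β * (Emax E - E i))) ≤ 1 :=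
    Real.exp_le_one_iff.mpr (neg_nonpos.mpr (mul_nonneg hβ.le (sub_nonneg.mpr (le_Emax E i))))
  have hflux (i : Fin n) :
      Real.exp (-(β * (Emax E - E i))) * gibbs β E i = Real.exp (-(β * Emax E)) / partZ β E := by
    rw [gibbs, mul_div_assoc', ← Real.exp_add]
    ring_nf
  rw [quasiCycle_eq_cycleMatrix]
  exact ⟨isStochastic_cycleMatrix hn₂ (fun i => (Real.exp_pos _).le) hrate_le_one,
    cycleMatrix_mulVec_eq_self _ hn₂ hflux,
    0, 1, cycleMatrix_one_zero_ne_zero_one _ hn (fun i => Real.exp (-(β * E i))) (by positivity)⟩
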